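/- Define Φ(z, w) = (1/2)·log₂(1 + zᴴAz/σ₁²) - (1/2)·log₂(1 + wᴴBw/σ₂²), where A, B are Hermitian positive semidefinite, σ₁, σ₂ > 0. Define the surrogate Φ̃(z, w | z⋆, w⋆) = (1/2)·log₂(1 + 2Re((z⋆)ᴴAz)/σ₁² - (z⋆)ᴴAz⋆/σ₁²) - (wᴴBw - (w⋆)ᴴBw⋆)/(2·ln2·(σ₂² + (w⋆)ᴴBw⋆)) - (1/2)·log₂(1 + (w⋆)ᴴBw⋆/σ₂²). Then for all z, w with 2Re((z⋆)ᴴAz)/σ₁² - (z⋆)ᴴAz⋆/σ₁² > -1: (i) Φ̃(z, w | z⋆, w⋆) ≤ Φ(z, w), and (ii) Φ̃(z⋆, w⋆ | z⋆, w⋆) = Φ(z⋆, w⋆). -/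

import Mathlib

/-!
Since `A ⪰ 0`, `(z - z⋆)ᴴA(z - z⋆) ≥ 0` gives `zᴴAz ≥ 2 Re((z⋆)ᴴAz) - (z⋆)ᴴAz⋆`, so the first
logarithm of `Φ̃` is below that of `Φ` by monotonicity. The second logarithm of `Φ̃` is the tangent
line of the concave function `u ↦ log₂(1 + u/σ₂²)` at `u = (w⋆)ᴴBw⋆`, which lies above it.
-/

open Matrix
open scoped ComplexOrder

theorem Matrix.IsHermitian.re_star_dotProduct_mulVec_comm {𝕜 n : Type*} [RCLike 𝕜] [Fintype n]
    {A : Matrix n n 𝕜} (hA : A.IsHermitian) (x y : n → 𝕜) :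
    RCLike.re (star x ⬝ᵥ A *ᵥ y) = RCLike.re (star y ⬝ᵥ A *ᵥ x) := by
  rw [← RCLike.conj_re, ← RCLike.star_def, ← star_dotProduct_star, star_star, dotProduct_mulVec,
    star_mulVec, hA.eq, dotProduct_comm]

theorem Matrix.PosSemidef.two_mul_re_sub_le_re {𝕜 n : Type*} [RCLike 𝕜] [Fintype n]
    {A : Matrix n n 𝕜} (hA : A.PosSemidef) (x y : n → 𝕜) :
    2 * RCLike.re (star x ⬝ᵥ A *ᵥ y) - RCLike.re (star x ⬝ᵥ A *ᵥ x)
      ≤ RCLike.re (star y ⬝ᵥ A *ᵥ y) := by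
  have h := hA.re_dotProduct_nonneg (y - x)
  simp only [star_sub, mulVec_sub, sub_dotProduct, dotProduct_sub, map_sub] at h
  linarith [hA.isHermitian.re_star_dotProduct_mulVec_comm x y]

theorem Real.log_le_log_add_sub_div {x y : ℝ} (hx : 0 < x) (hy : 0 < y) :
    Real.log x ≤ Real.log y + (x - y) / y := by
  have h := Real.log_le_sub_one_of_pos (div_pos hx hy)
  rw [Real.log_div hx.ne' hy.ne'] at h
  have : x / y - 1 = (x - y) / y := by field_simp
  linarith

theorem Real.logb_one_add_div_le {b c s t : ℝ} (hb : 1 < b) (hc : 0 < c) (hs : 0 < c + s)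
    (ht : 0 < c + t) :
    Real.logb b (1 + t / c) ≤ Real.logb b (1 + s / c) + (t - s) / (Real.log b * (c + s)) := by
  have one_add_div (u : ℝ) : 1 + u / c = (c + u) / c := by field_simp
  have h := Real.log_le_log_add_sub_div (div_pos ht hc) (div_pos hs hc)
  have hts : ((c + t) / c - (c + s) / c) / ((c + s) / c) = (t - s) / (c + s) := by
    field_simp; ring
  rw [hts] at h
  rw [one_add_div, one_add_div, Real.logb, Real.logb, mul_comm, ← div_div, ← add_div]
  exact div_le_div_of_nonneg_right h (Real.log_pos hb).le

theorem stmt_5_general (m n : ℕ)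
    (A : Matrix (Fin m) (Fin m) ℂ) (B : Matrix (Fin n) (Fin n) ℂ)
    (hA : A.PosSemidef) (hB : B.PosSemidef)
    (σ₁ σ₂ : ℝ) (hσ₂ : 0 < σ₂)
    (zs : Fin m → ℂ) (ws : Fin n → ℂ)
    (Φ : (Fin m → ℂ) → (Fin n → ℂ) → ℝ)
    (hΦ : ∀ z w, Φ z w =
      (1/2) * Real.logb 2 (1 + (star z ⬝ᵥ A.mulVec z).re / σ₁ ^ 2)
        - (1/2) * Real.logb 2 (1 + (star w ⬝ᵥ B.mulVec w).re / σ₂ ^ 2))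
    (Φt : (Fin m → ℂ) → (Fin n → ℂ) → ℝ)
    (hΦt : ∀ z w, Φt z w =
      (1/2) * Real.logb 2 (1 + 2 * (star zs ⬝ᵥ A.mulVec z).re / σ₁ ^ 2
          - (star zs ⬝ᵥ A.mulVec zs).re / σ₁ ^ 2)
        - ((star w ⬝ᵥ B.mulVec w).re - (star ws ⬝ᵥ B.mulVec ws).re)
            / (2 * Real.log 2 * (σ₂ ^ 2 + (star ws ⬝ᵥ B.mulVec ws).re))
        - (1/2) * Real.logb 2 (1 + (star ws ⬝ᵥ B.mulVec ws).re / σ₂ ^ 2)) :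
    (∀ z w, -1 < 2 * (star zs ⬝ᵥ A.mulVec z).re / σ₁ ^ 2
        - (star zs ⬝ᵥ A.mulVec zs).re / σ₁ ^ 2 → Φt z w ≤ Φ z w)
      ∧ Φt zs ws = Φ zs ws := by
  refine ⟨fun z w hz => ?_, by rw [hΦ, hΦt]; ring_nf⟩
  have hσ₂2 : 0 < σ₂ ^ 2 := by positivity
  have hz_arg : 1 + 2 * (star zs ⬝ᵥ A *ᵥ z).re / σ₁ ^ 2 - (star zs ⬝ᵥ A *ᵥ zs).re / σ₁ ^ 2
      ≤ 1 + (star z ⬝ᵥ A *ᵥ z).re / σ₁ ^ 2 := by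
    rw [add_sub_assoc, ← sub_div]
    gcongr
    exact hA.two_mul_re_sub_le_re zs z
  have hz_log := Real.logb_le_logb_of_le one_lt_two (by linarith) hz_arg
  have hw_log := Real.logb_one_add_div_le one_lt_two hσ₂2
    (add_pos_of_pos_of_nonneg hσ₂2 (hB.re_dotProduct_nonneg ws))
    (add_pos_of_pos_of_nonneg hσ₂2 (hB.re_dotProduct_nonneg w))
  simp only [RCLike.re_to_complex] at hw_log
  have halve : ∀ x y : ℝ, x / (2 * y) = x / y / 2 := fun x y => by ring
  rw [hΦ, hΦt, mul_assoc, halve]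
  linarith

/-- The SCO surrogate `Φ̃` is a global lower bound on `Φ` (on the region where its
logarithm argument is positive) and is tight at the expansion point `(z⋆, w⋆)`. -/
theorem stmt_5 (m n : ℕ)
    (A : Matrix (Fin m) (Fin m) ℂ) (B : Matrix (Fin n) (Fin n) ℂ)
    (hA : A.PosSemidef) (hB : B.PosSemidef)
    (σ₁ σ₂ : ℝ) (hσ₁ : 0 < σ₁) (hσ₂ : 0 < σ₂)
    (zs : Fin m → ℂ) (ws : Fin n → ℂ)
    (Φ : (Fin m → ℂ) → (Fin n → ℂ) → ℝ)
    (hΦ : ∀ z w, Φ z w =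
      (1/2) * Real.logb 2 (1 + (star z ⬝ᵥ A.mulVec z).re / σ₁ ^ 2)
        - (1/2) * Real.logb 2 (1 + (star w ⬝ᵥ B.mulVec w).re / σ₂ ^ 2))
    (Φt : (Fin m → ℂ) → (Fin n → ℂ) → ℝ)
    (hΦt : ∀ z w, Φt z w =
      (1/2) * Real.logb 2 (1 + 2 * (star zs ⬝ᵥ A.mulVec z).re / σ₁ ^ 2
          - (star zs ⬝ᵥ A.mulVec zs).re / σ₁ ^ 2)
        - ((star w ⬝ᵥ B.mulVec w).re - (star ws ⬝ᵥ B.mulVec ws).re)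
            / (2 * Real.log 2 * (σ₂ ^ 2 + (star ws ⬝ᵥ B.mulVec ws).re))
        - (1/2) * Real.logb 2 (1 + (star ws ⬝ᵥ B.mulVec ws).re / σ₂ ^ 2)) :
    (∀ z w, -1 < 2 * (star zs ⬝ᵥ A.mulVec z).re / σ₁ ^ 2
        - (star zs ⬝ᵥ A.mulVec zs).re / σ₁ ^ 2 → Φt z w ≤ Φ z w)
      ∧ Φt zs ws = Φ zs ws :=
  stmt_5_general m n A B hA hB σ₁ σ₂ hσ₂ zs ws Φ hΦ Φt hΦt
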